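/- arXiv:1103.2650 — 3 statements merged into one kernel-verified Lean document; each statement's English description precedes it below -/
import Mathlib

section
/- For all natural numbers n, m, r, the identity ∑_{k=0}^{n} ((r+1)/(n+r−k+1)) · C(m+2k, k) · C(2n+r−2k, n−k) = C(2n+m+r+1, n) holds, where both sides are interpreted as rational numbers. -/
/-!
The weight `(r + 1) / (j + r + 1) * C(2j + r, j)` is the ballot number
`C(2j + r, j) - C(2j + r, j - 1)`. Ballot numbers satisfy the lattice-path recurrence
`b(j + 1, r + 1) = b(j + 1, r) + b(j, r + 2)`, so their convolution with `C(m + 2k, k)` obeys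
Pascal's rule in `(n, r)`, just as `C(2n + m + r + 1, n)` does; induction on `n`, then on `r`,
identifies the two.
-/

open Finset

-- `C(2j + r, j + r + 1)` is `C(2j + r, j - 1)` by symmetry when `j ≥ 1`, and `0` when `j = 0`.
def ballot (j r : ℕ) : ℚ :=
  (2 * j + r).choose j - (2 * j + r).choose (j + r + 1)

@[simp]
lemma ballot_zero_left (r : ℕ) : ballot 0 r = 1 := by
  simp [ballot]

lemma ballot_succ_succ (j r : ℕ) :
    ballot (j + 1) (r + 1) = ballot (j + 1) r + ballot j (r + 2) := by
  have h₁ := Nat.choose_succ_succ' (2 * j + r + 2) j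
  have h₂ := Nat.choose_succ_succ' (2 * j + r + 2) (j + r + 2)
  rw [ballot, ballot, ballot, show 2 * (j + 1) + (r + 1) = 2 * j + r + 2 + 1 by ring,
    show j + 1 + (r + 1) + 1 = j + r + 2 + 1 by ring, show 2 * j + (r + 2) = 2 * j + r + 2 by ring,
    show j + (r + 2) + 1 = j + r + 2 + 1 by ring, show 2 * (j + 1) + r = 2 * j + r + 2 by ring,
    show j + 1 + r + 1 = j + r + 2 by ring, h₁, h₂]
  push_cast
  ring

lemma ballot_succ_zero (j : ℕ) : ballot (j + 1) 0 = ballot j 1 := by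
  have h₁ := Nat.choose_succ_succ' (2 * j + 1) j
  have h₂ := Nat.choose_succ_succ' (2 * j + 1) (j + 1)
  rw [ballot, ballot, show 2 * (j + 1) + 0 = 2 * j + 1 + 1 by ring,
    show j + 1 + 0 + 1 = j + 1 + 1 by ring, h₁, h₂]
  push_cast
  ring

lemma ballot_eq_div_mul_choose (j r : ℕ) :
    ballot j r = ((r : ℚ) + 1) / ((j : ℚ) + r + 1) * (2 * j + r).choose j := by
  cases j with
  | zero => field_simp; simp
  | succ j =>
    have hsymm : (2 * j + r + 2).choose (j + r + 2) = (2 * j + r + 2).choose j :=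
      Nat.choose_symm_of_eq_add (by ring)
    have hstep := Nat.choose_succ_right_eq (2 * j + r + 2) j
    rw [show 2 * j + r + 2 - j = j + r + 2 by omega] at hstep
    have hstepQ : ((2 * j + r + 2).choose (j + 1) : ℚ) * (j + 1)
        = (2 * j + r + 2).choose j * (j + r + 2) := by exact_mod_cast hstep
    rw [ballot, show 2 * (j + 1) + r = 2 * j + r + 2 by ring,
      show j + 1 + r + 1 = j + r + 2 by ring, hsymm]
    push_cast
    field_simp
    linear_combination hstepQ

section
variable (m : ℕ)

def ballotConv (n r : ℕ) : ℚ :=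
  ∑ p ∈ antidiagonal n, ((m + 2 * p.1).choose p.1 : ℚ) * ballot p.2 r

lemma ballotConv_succ_succ (n r : ℕ) :
    ballotConv m (n + 1) (r + 1) = ballotConv m (n + 1) r + ballotConv m n (r + 2) := by
  simp only [ballotConv, Nat.sum_antidiagonal_succ', ballot_zero_left, ballot_succ_succ, mul_add,
    sum_add_distrib]
  ring

lemma ballotConv_succ_zero (n : ℕ) :
    ballotConv m (n + 1) 0 = ballotConv m n 1 + (m + 2 * (n + 1)).choose (n + 1) := by
  simp only [ballotConv, Nat.sum_antidiagonal_succ', ballot_zero_left, ballot_succ_zero]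
  ring

theorem ballotConv_eq_choose (n r : ℕ) : ballotConv m n r = (2 * n + m + r + 1).choose n := by
  induction n generalizing r with
  | zero => simp [ballotConv]
  | succ n ih =>
    induction r with
    | zero =>
      have h := Nat.choose_succ_succ' (2 * n + m + 2) n
      rw [ballotConv_succ_zero, ih, show 2 * (n + 1) + m + 0 + 1 = 2 * n + m + 2 + 1 by ring, h,
        show m + 2 * (n + 1) = 2 * n + m + 2 by ring]
      push_cast
      ring
    | succ r ihr =>
      have h := Nat.choose_succ_succ' (2 * n + m + r + 3) n
      rw [ballotConv_succ_succ, ihr, ih,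
        show 2 * (n + 1) + m + (r + 1) + 1 = 2 * n + m + r + 3 + 1 by ring, h,
        show 2 * (n + 1) + m + r + 1 = 2 * n + m + r + 3 by ring,
        show 2 * n + m + (r + 2) + 1 = 2 * n + m + r + 3 by ring]
      push_cast
      ring

end

theorem combiwalk3 (n m r : ℕ) :
    ∑ k ∈ Finset.range (n + 1),
      ((r : ℚ) + 1) / ((n : ℚ) + r - k + 1) *
        (Nat.choose (m + 2 * k) k : ℚ) *
        (Nat.choose (2 * n + r - 2 * k) (n - k) : ℚ)
    = (Nat.choose (2 * n + m + r + 1) n : ℚ) := by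
  rw [← ballotConv_eq_choose, ballotConv, Nat.sum_antidiagonal_eq_sum_range_succ_mk]
  refine sum_congr rfl fun k hk => ?_
  have hkn : k ≤ n := Nat.lt_succ_iff.mp (mem_range.mp hk)
  rw [ballot_eq_div_mul_choose, show 2 * n + r - 2 * k = 2 * (n - k) + r by omega, Nat.cast_sub hkn]
  ring
end

section
/- For every natural number n, the identity ∑_{k=0}^{n} (4/(k+3)) · 2^{−k} · C(2k+1, k+2) = (2^{−n}/(n+3)) · C(2n+4, n+2) − 2 holds, where both sides are interpreted as rational numbers. -/
/-!
With Catalan numbers `C_m = binom(2m, m) / (m + 1)`, the summand equals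
`2^{-k} (C_{k+2} - 2 C_{k+1})`, so the sum telescopes to `2^{-n} C_{n+2} - 2 C_1`,
and `2^{-n} C_{n+2}` is the first term of the right-hand side.
-/

open Nat

theorem add_two_mul_choose_two_mul_add_one (k : ℕ) :
    (k + 2) * (2 * k + 1).choose (k + 2) = k * (2 * k + 1).choose (k + 1) := by
  have h := choose_succ_right_eq (2 * k + 1) (k + 1)
  rw [show 2 * k + 1 - (k + 1) = k by omega] at h
  linarith

theorem centralBinom_succ_eq_two_mul_choose (k : ℕ) :
    centralBinom (k + 1) = 2 * (2 * k + 1).choose (k + 1) := by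
  rw [centralBinom_eq_two_mul_choose, show 2 * (k + 1) = 2 * k + 1 + 1 by ring,
    choose_succ_succ', choose_symm_half, ← two_mul]

section Field

variable {K : Type*} [Field K] [CharZero K]

theorem cast_catalan_eq_centralBinom_div (n : ℕ) :
    (catalan n : K) = centralBinom n / (n + 1) := by
  rw [← succ_mul_catalan_eq_centralBinom]
  push_cast
  field_simp

theorem catalan_add_two_sub_two_mul_catalan_add_one (k : ℕ) :
    (catalan (k + 2) : K) - 2 * catalan (k + 1) = 4 / (k + 3) * (2 * k + 1).choose (k + 2) := by
  have h₁ : ((k + 2 : ℕ) : K) * ((2 * k + 1).choose (k + 2) : ℕ)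
      = k * ((2 * k + 1).choose (k + 1) : ℕ) := by
    exact_mod_cast add_two_mul_choose_two_mul_add_one k
  have h₂ : (centralBinom (k + 1) : K) = 2 * ((2 * k + 1).choose (k + 1) : ℕ) := by
    exact_mod_cast centralBinom_succ_eq_two_mul_choose k
  have h₃ : ((k + 2 : ℕ) : K) * centralBinom (k + 2)
      = 2 * (2 * (k + 1 : ℕ) + 1) * centralBinom (k + 1) := by
    exact_mod_cast succ_mul_centralBinom_succ (k + 1)
  have hk₂ : (k : K) + 2 ≠ 0 := by exact_mod_cast (k + 1).succ_ne_zero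
  have hk₃ : (k : K) + 3 ≠ 0 := by exact_mod_cast (k + 2).succ_ne_zero
  rw [cast_catalan_eq_centralBinom_div, cast_catalan_eq_centralBinom_div]
  push_cast at *
  norm_num only [add_assoc]
  field_simp
  linear_combination h₃ + 2 * k * h₂ - 4 * h₁

theorem two_mul_two_zpow_neg_natCast_succ (k : ℕ) :
    (2 : K) * 2 ^ (-((k + 1 : ℕ) : ℤ)) = 2 ^ (-(k : ℤ)) := by
  rw [Nat.cast_succ, neg_add, zpow_add₀ two_ne_zero, zpow_neg_one]
  ring

end Field

theorem combiwalk8_special (n : ℕ) :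
    ∑ k ∈ Finset.range (n + 1),
      (4 / ((k : ℚ) + 3)) * (2 : ℚ) ^ (-(k : ℤ)) *
        (Nat.choose (2 * k + 1) (k + 2) : ℚ)
    = (2 : ℚ) ^ (-(n : ℤ)) / ((n : ℚ) + 3) *
        (Nat.choose (2 * n + 4) (n + 2) : ℚ) - 2 := by
  let g : ℕ → ℚ := fun j ↦ 2 * 2 ^ (-(j : ℤ)) * catalan (j + 1)
  have hterm (k : ℕ) : 4 / ((k : ℚ) + 3) * 2 ^ (-(k : ℤ)) * ((2 * k + 1).choose (k + 2) : ℚ)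
      = g (k + 1) - g k := by
    rw [mul_comm _ (2 ^ _ : ℚ), mul_assoc, ← catalan_add_two_sub_two_mul_catalan_add_one]
    simp only [g, two_mul_two_zpow_neg_natCast_succ]
    ring
  have hcat : (catalan (n + 2) : ℚ) = (2 * n + 4).choose (n + 2) / (n + 3) := by
    rw [cast_catalan_eq_centralBinom_div, centralBinom_eq_two_mul_choose,
      show 2 * (n + 2) = 2 * n + 4 by ring]
    push_cast
    ring
  rw [Finset.sum_congr rfl fun k _ ↦ hterm k, Finset.sum_range_sub]
  simp only [g, hcat, two_mul_two_zpow_neg_natCast_succ, zero_add, catalan_one, Nat.cast_zero,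
    neg_zero, zpow_zero]
  ring
end

section
/- Let N be a natural number and m an integer with 0 ≤ m ≤ N and N + m even, and set μ = (N+m)/2. Then the number of walks of length N from 0 to m all of whose partial sums are ≥ −2 equals ((m+3)·((m+1)(m+5) + 3(N+1)²) / (4(μ+1)(μ+2)(μ+3))) · C(N, μ), where this quotient is an equality of rational numbers with the cardinality cast to ℚ. -/
/-!
By the reflection principle, the walks of length `N` from `0` to `m` that never go below a level
`b ≤ 0` number `C(N, μ) - C(N, μ + 1 - b)` with `μ = (N + m) / 2`. Instead of building the
reflection, we check that this difference obeys the same last-step recursion as the walk count and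
vanishes on the absorbing level `m = b - 1`, by the symmetry `C(N, k) = C(N, N - k)`. For `b = -2`
the stated quotient is `C(N, μ) - C(N, μ + 3)`, rewritten with
`C(N, μ + 3) (μ + 1) (μ + 2) (μ + 3) = C(N, μ) (N - μ) (N - μ - 1) (N - μ - 2)`.
-/

open Finset

def partialSum {N : ℕ} (s : Fin N → ℤ) (j : ℕ) : ℤ :=
  ∑ i ∈ univ.filter (fun i : Fin N => (i : ℕ) < j), s i

theorem partialSum_of_le {N j : ℕ} (s : Fin N → ℤ) (hj : N ≤ j) :
    partialSum s j = ∑ i, s i := by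
  rw [partialSum, filter_true_of_mem fun i _ => i.isLt.trans_le hj]

theorem partialSum_snoc {N j : ℕ} (s : Fin N → ℤ) (x : ℤ) (hj : j ≤ N) :
    partialSum (Fin.snoc s x : Fin (N + 1) → ℤ) j = partialSum s j := by
  simp only [partialSum, sum_filter, Fin.sum_univ_castSucc, Fin.val_castSucc, Fin.snoc_castSucc,
    Fin.val_last, if_neg (not_lt.2 hj), add_zero]

def walksAbove (b : ℤ) (N : ℕ) (m : ℤ) : Set (Fin N → ℤ) :=
  {s | (∀ j, s j = -1 ∨ s j = 1) ∧ ∑ i, s i = m ∧ ∀ j ≤ N, b ≤ partialSum s j}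

section walksAbove

variable {b m : ℤ} {N : ℕ}

theorem finite_walksAbove : (walksAbove b N m).Finite :=
  (Set.Finite.pi' fun _ => ({-1, 1} : Set ℤ).toFinite).subset fun _ hs i => hs.1 i

theorem walksAbove_eq_empty_of_lt (hm : m < b) : walksAbove b N m = ∅ :=
  Set.eq_empty_of_forall_notMem fun s ⟨_, hsum, hbound⟩ => by
    have := hbound N le_rfl
    rw [partialSum_of_le s le_rfl, hsum] at this
    omega

theorem ncard_walksAbove_zero (hb : b ≤ 0) :
    (walksAbove b 0 m).ncard = if m = 0 then 1 else 0 := by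
  split_ifs with hm
  · subst hm
    have : walksAbove b 0 0 = Set.univ := Set.eq_univ_of_forall fun s =>
      ⟨fun j => j.elim0, by simp, fun j _ => by simp [partialSum, hb]⟩
    rw [this, Set.ncard_univ, Nat.card_unique]
  · rw [Set.ncard_eq_zero]
    exact Set.eq_empty_of_forall_notMem fun s hs => hm (by simpa using hs.2.1.symm)

theorem snoc_mem_walksAbove_iff {t : Fin N → ℤ} {x : ℤ} :
    (Fin.snoc t x : Fin (N + 1) → ℤ) ∈ walksAbove b (N + 1) m ↔
      (x = -1 ∨ x = 1) ∧ t ∈ walksAbove b N (m - x) ∧ b ≤ m := by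
  have hsum : ∑ i, (Fin.snoc t x : Fin (N + 1) → ℤ) i = ∑ i, t i + x := by
    simp [Fin.sum_univ_castSucc]
  have hbound : (∀ j ≤ N + 1, b ≤ partialSum (Fin.snoc t x : Fin (N + 1) → ℤ) j) ↔
      (∀ j ≤ N, b ≤ partialSum t j) ∧ b ≤ ∑ i, t i + x := by
    rw [← hsum, ← partialSum_of_le _ le_rfl]
    constructor
    · exact fun h =>
        ⟨fun j hj => partialSum_snoc t x hj ▸ h j (Nat.le_succ_of_le hj), h _ le_rfl⟩
    · rintro ⟨h, hlast⟩ j hj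
      rcases hj.lt_or_eq with hj | rfl
      · rw [Nat.lt_succ_iff] at hj
        exact partialSum_snoc t x hj ▸ h j hj
      · exact hlast
  simp only [walksAbove, Set.mem_ofPred_eq, Fin.forall_fin_succ', Fin.snoc_castSucc,
    Fin.snoc_last, hsum, hbound]
  constructor
  · rintro ⟨⟨ht, hx⟩, hs, hb, hm⟩
    exact ⟨hx, ⟨ht, by omega, hb⟩, by omega⟩
  · rintro ⟨hx, ⟨ht, hs, hb⟩, hm⟩
    exact ⟨⟨ht, hx⟩, by omega, hb, by omega⟩

theorem walksAbove_succ (hm : b ≤ m) :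
    walksAbove b (N + 1) m = (Fin.snoc · 1) '' walksAbove b N (m - 1) ∪
      (Fin.snoc · (-1)) '' walksAbove b N (m + 1) := by
  ext s
  rw [← Fin.snoc_init_self s]
  simp only [snoc_mem_walksAbove_iff, Set.mem_union, Set.mem_image, Fin.snoc_inj, hm, and_true]
  constructor
  · rintro ⟨hx | hx, ht⟩
    · exact Or.inr ⟨_, by rwa [hx, sub_neg_eq_add] at ht, rfl, hx.symm⟩
    · exact Or.inl ⟨_, by rwa [hx] at ht, rfl, hx.symm⟩
  · rintro (⟨t, ht, rfl, hx⟩ | ⟨t, ht, rfl, hx⟩)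
    · exact ⟨Or.inr hx.symm, by rwa [← hx]⟩
    · exact ⟨Or.inl hx.symm, by rwa [← hx, sub_neg_eq_add]⟩

theorem ncard_walksAbove_succ (hm : b ≤ m) :
    (walksAbove b (N + 1) m).ncard =
      (walksAbove b N (m - 1)).ncard + (walksAbove b N (m + 1)).ncard := by
  have hdisj : Disjoint ((Fin.snoc · 1) '' walksAbove b N (m - 1))
      ((Fin.snoc · (-1)) '' walksAbove b N (m + 1) : Set (Fin (N + 1) → ℤ)) := by
    rw [Set.disjoint_left]
    rintro _ ⟨t, _, rfl⟩ ⟨t', _, h⟩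
    simpa using congr_fun h (Fin.last N)
  rw [walksAbove_succ hm, Set.ncard_union_eq hdisj (finite_walksAbove.image _)
    (finite_walksAbove.image _)]
  congr 1 <;> exact Set.ncard_image_of_injective _ fun _ _ h => (Fin.snoc_inj.1 h).1

end walksAbove

def intChoose (N : ℕ) (k : ℤ) : ℕ :=
  if 0 ≤ k then N.choose k.toNat else 0

section intChoose

variable {N : ℕ} {k : ℤ}

theorem intChoose_natCast (N n : ℕ) : intChoose N n = N.choose n := by
  simp [intChoose]

theorem intChoose_of_neg (hk : k < 0) : intChoose N k = 0 :=
  if_neg hk.not_ge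

theorem intChoose_of_lt (hk : N < k) : intChoose N k = 0 := by
  lift k to ℕ using by omega
  rw [intChoose_natCast, Nat.choose_eq_zero_of_lt (by omega)]

theorem intChoose_zero_left : intChoose 0 k = if k = 0 then 1 else 0 := by
  rcases lt_or_ge k 0 with hk | hk
  · rw [intChoose_of_neg hk, if_neg hk.ne]
  · lift k to ℕ using hk
    rw [intChoose_natCast]
    cases k <;> simp
    omega

theorem intChoose_succ (N : ℕ) (k : ℤ) :
    intChoose (N + 1) k = intChoose N (k - 1) + intChoose N k := by
  rcases lt_or_ge k 0 with hk | hk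
  · rw [intChoose_of_neg hk, intChoose_of_neg hk, intChoose_of_neg (by omega)]
  · lift k to ℕ using hk
    rw [intChoose_natCast, intChoose_natCast]
    cases k with
    | zero => simp [intChoose_of_neg]
    | succ n =>
      rw [Nat.cast_succ, add_sub_cancel_right, intChoose_natCast, Nat.choose_succ_succ']

theorem intChoose_symm {l : ℤ} (h : k + l = N) : intChoose N k = intChoose N l := by
  rcases lt_or_ge k 0 with hk | hk
  · rw [intChoose_of_neg hk, intChoose_of_lt (by omega)]
  rcases lt_or_ge l 0 with hl | hl
  · rw [intChoose_of_neg hl, intChoose_of_lt (by omega)]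
  lift k to ℕ using hk
  lift l to ℕ using hl
  rw [intChoose_natCast, intChoose_natCast, Nat.choose_symm_of_eq_add (by omega : N = k + l)]

end intChoose

theorem ncard_walksAbove {b : ℤ} (hb : b ≤ 0) (N : ℕ) {m : ℤ} (hpar : Even ((N : ℤ) + m))
    (hm : b - 1 ≤ m) :
    ((walksAbove b N m).ncard : ℤ) =
      intChoose N ((N + m) / 2) - intChoose N ((N + m) / 2 + 1 - b) := by
  rw [Int.even_iff] at hpar
  induction N generalizing m with
  | zero =>
    rw [ncard_walksAbove_zero hb, intChoose_zero_left, intChoose_zero_left]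
    split_ifs <;> omega
  | succ N ih =>
    set U := ((N + 1 : ℕ) + m) / 2
    rcases hm.lt_or_eq with hm | rfl
    · have hdown : ((N : ℤ) + (m - 1)) / 2 = U - 1 := by omega
      have hup : ((N : ℤ) + (m + 1)) / 2 = U := by omega
      rw [ncard_walksAbove_succ (by omega), Nat.cast_add, ih (by omega) (by omega),
        ih (by omega) (by omega), hdown, hup, intChoose_succ N U, intChoose_succ N (U + 1 - b),
        show U - 1 + 1 - b = U + 1 - b - 1 by ring]
      push_cast
      ring
    · rw [walksAbove_eq_empty_of_lt (by omega), Set.ncard_empty,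
        intChoose_symm (by omega : U + (U + 1 - b) = (N + 1 : ℕ))]
      simp

section castChoose

variable {R : Type*} [CommRing R]

theorem Nat.cast_choose_succ_mul (N k : ℕ) :
    (N.choose (k + 1) : R) * (k + 1) = N.choose k * (N - k) := by
  rcases le_or_gt k N with hk | hk
  · rw [← Nat.cast_sub hk]
    exact_mod_cast congrArg (Nat.cast : ℕ → R) (Nat.choose_succ_right_eq N k)
  · rw [Nat.choose_eq_zero_of_lt hk, Nat.choose_eq_zero_of_lt (by omega)]
    simp

theorem Nat.cast_choose_add_three_mul (N k : ℕ) :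
    (N.choose (k + 3) : R) * ((k + 1) * (k + 2) * (k + 3)) =
      N.choose k * ((N - k) * (N - k - 1) * (N - k - 2)) := by
  have h₁ := Nat.cast_choose_succ_mul (R := R) N k
  have h₂ := Nat.cast_choose_succ_mul (R := R) N (k + 1)
  have h₃ := Nat.cast_choose_succ_mul (R := R) N (k + 2)
  push_cast at h₂ h₃
  linear_combination ((k : R) + 1) * (k + 2) * h₃ + ((k : R) + 1) * (N - k - 2) * h₂ +
    ((N : R) - k - 1) * (N - k - 2) * h₁

end castChoose

theorem walk_ge_neg_two_count_general (N : ℕ) (m : ℤ) (hm0 : 0 ≤ m)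
    (heven : Even ((N : ℤ) + m)) (μ : ℤ) (hμ : μ = ((N : ℤ) + m) / 2) :
    (Nat.card {s : Fin N → ℤ //
        (∀ j, s j = -1 ∨ s j = 1) ∧
        (∑ i, s i) = m ∧
        ∀ j ≤ N, -2 ≤ (∑ i ∈ Finset.univ.filter (fun i : Fin N => (i : ℕ) < j), s i)} : ℚ)
      = ((m : ℚ) + 3) * (((m : ℚ) + 1) * ((m : ℚ) + 5) + 3 * ((N : ℚ) + 1) ^ 2) /
          (4 * ((μ : ℚ) + 1) * ((μ : ℚ) + 2) * ((μ : ℚ) + 3)) *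
          (Nat.choose N μ.toNat : ℚ) := by
  change ((walksAbove (-2) N m).ncard : ℚ) = _
  lift μ to ℕ using (by omega) with n
  have hcount := ncard_walksAbove (by norm_num) N heven (by omega : -2 - 1 ≤ m)
  rw [← hμ, show (n : ℤ) + 1 - -2 = (n + 3 : ℕ) by push_cast; ring, intChoose_natCast,
    intChoose_natCast] at hcount
  have hN : (N : ℚ) = 2 * n - m := by
    rw [Int.even_iff] at heven
    exact_mod_cast (by omega : (N : ℤ) = 2 * n - m)
  have hratio := Nat.cast_choose_add_three_mul (R := ℚ) N n
  rw [hN] at hratio ⊢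
  rw [Int.toNat_natCast, Int.cast_natCast, (by exact_mod_cast hcount :
    ((walksAbove (-2) N m).ncard : ℚ) = N.choose n - N.choose (n + 3))]
  field_simp
  linear_combination (-4 : ℚ) * hratio

theorem walk_ge_neg_two_count (N : ℕ) (m : ℤ) (hm0 : 0 ≤ m) (hmN : m ≤ (N : ℤ))
    (heven : Even ((N : ℤ) + m)) (μ : ℤ) (hμ : μ = ((N : ℤ) + m) / 2) :
    (Nat.card {s : Fin N → ℤ //
        (∀ j, s j = -1 ∨ s j = 1) ∧
        (∑ i, s i) = m ∧
        ∀ j ≤ N, -2 ≤ (∑ i ∈ Finset.univ.filter (fun i : Fin N => (i : ℕ) < j), s i)} : ℚ)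
      = ((m : ℚ) + 3) * (((m : ℚ) + 1) * ((m : ℚ) + 5) + 3 * ((N : ℚ) + 1) ^ 2) /
          (4 * ((μ : ℚ) + 1) * ((μ : ℚ) + 2) * ((μ : ℚ) + 3)) *
          (Nat.choose N μ.toNat : ℚ) :=
  walk_ge_neg_two_count_general N m hm0 heven μ hμ
end
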